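/- Let C ⊆ (ℤ/4ℤ)^7 be the ℤ/4ℤ-linear code generated by the rows of the 3×7 matrix whose columns are (1,0,0), (0,1,0), (0,0,1), (1,1,1), (2,1,3), (1,2,3), (1,3,2). Then C has exactly 64 codewords, and its image under the coordinatewise Gray map is a binary code of length 14 with 64 codewords, minimum Hamming distance 6, and Hamming weight distribution 1 + 42·X^6 + 7·X^8 + 14·X^10 (i.e. 42 words of weight 6, 7 of weight 8, 14 of weight 10, and the zero word). -/
import Mathlib

set_option maxRecDepth 100000
set_option maxHeartbeats 16000000

/-- The Gray map ℤ/4ℤ → 𝔽₂²: 0 ↦ 00, 1 ↦ 01, 2 ↦ 11, 3 ↦ 10. -/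
def gray (a : ZMod 4) : Fin 2 → ZMod 2 :=
  if a = 0 then ![0, 0] else if a = 1 then ![0, 1] else if a = 2 then ![1, 1] else ![1, 0]

/-- The coordinatewise Gray map (ℤ/4ℤ)ⁿ → 𝔽₂^(2n). -/
def grayWord {n : ℕ} (v : Fin n → ZMod 4) : Fin n × Fin 2 → ZMod 2 :=
  fun p => gray (v p.1) p.2

/-- The generator matrix whose columns are
(1,0,0), (0,1,0), (0,0,1), (1,1,1), (2,1,3), (1,2,3), (1,3,2). -/
def G7 : Fin 3 → Fin 7 → ZMod 4 :=
  ![![1,0,0,1,2,1,1], ![0,1,0,1,1,2,3], ![0,0,1,1,3,3,2]]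

/-- The ℤ/4ℤ-linear code generated by the rows of `G7`. -/
def C7 : Submodule (ZMod 4) (Fin 7 → ZMod 4) := Submodule.span (ZMod 4) (Set.range G7)

/-- The binary Gray image of `C7`, of length 14. -/
def B14 : Set (Fin 7 × Fin 2 → ZMod 2) := grayWord '' (C7 : Set (Fin 7 → ZMod 4))

/- auxiliary definitions -/
def f7 (v : Fin 3 → ZMod 4) : Fin 7 → ZMod 4 := Matrix.vecMul v G7

def F14 : Finset (Fin 7 × Fin 2 → ZMod 2) :=
  Finset.image (fun v => grayWord (f7 v)) Finset.univ

lemma C7_eq_range : (C7 : Set (Fin 7 → ZMod 4)) = Set.range f7 := by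
  have h : C7 = LinearMap.range (Matrix.vecMulLinear G7) := (range_vecMulLinear G7).symm
  rw [h, LinearMap.coe_range]
  rfl

lemma f7_inj : Function.Injective f7 := by
  have h : ∀ a b : Fin 3 → ZMod 4, f7 a = f7 b → a = b := by decide
  exact fun a b => h a b

lemma B14_eq : B14 = ↑F14 := by
  rw [B14, C7_eq_range, ← Set.range_comp, F14, Finset.coe_image, Finset.coe_univ,
    Set.image_univ]
  rfl

lemma mem_B14 (v : Fin 3 → ZMod 4) : grayWord (f7 v) ∈ B14 :=
  ⟨f7 v, by rw [C7_eq_range]; exact ⟨v, rfl⟩, rfl⟩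

lemma dist_ge : ∀ v w : Fin 3 → ZMod 4, f7 v ≠ f7 w →
    6 ≤ hammingDist (grayWord (f7 v)) (grayWord (f7 w)) := by decide

lemma norm_mem : ∀ v : Fin 3 → ZMod 4,
    hammingNorm (grayWord (f7 v)) ∈ ({0, 6, 8, 10} : Finset ℕ) := by decide

/-- `C7` has 64 codewords and its Gray image is a binary code of length 14 with
64 codewords, minimum Hamming distance 6 and weight enumerator
1 + 42·X⁶ + 7·X⁸ + 14·X¹⁰. -/
theorem code_of_hyperoval_Z4 :
    Nat.card C7 = 64 ∧ B14.ncard = 64 ∧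
    (∀ x ∈ B14, ∀ y ∈ B14, x ≠ y → 6 ≤ hammingDist x y) ∧
    (∃ x ∈ B14, ∃ y ∈ B14, hammingDist x y = 6) ∧
    (∀ w : ℕ, {x ∈ B14 | hammingNorm x = w}.ncard =
      if w = 0 then 1 else if w = 6 then 42 else if w = 8 then 7 else
        if w = 10 then 14 else 0) := by
  refine ⟨?_, ?_, ?_, ?_, ?_⟩
  · have h1 : Nat.card C7 = Nat.card (Set.range f7) := by
      have : (C7 : Set (Fin 7 → ZMod 4)) = Set.range f7 := C7_eq_range
      exact congrArg Nat.card (congrArg Set.Elem this)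
    rw [h1, Nat.card_range_of_injective f7_inj, Nat.card_eq_fintype_card]
    decide
  · rw [B14_eq, Set.ncard_coe_finset]
    decide
  · rintro x ⟨u, hu, rfl⟩ y ⟨w, hw, rfl⟩ hxy
    rw [C7_eq_range] at hu hw
    obtain ⟨v, rfl⟩ := hu
    obtain ⟨v', rfl⟩ := hw
    exact dist_ge v v' (fun h => hxy (congrArg grayWord h))
  · refine ⟨grayWord (f7 ![1,0,0]), mem_B14 _, grayWord (f7 ![0,0,0]), mem_B14 _, ?_⟩
    decide
  · intro w
    have hset : {x ∈ B14 | hammingNorm x = w} =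
        ↑(F14.filter (fun x => hammingNorm x = w)) := by
      rw [B14_eq, Finset.coe_filter]
      rfl
    rw [hset, Set.ncard_coe_finset]
    by_cases h0 : w = 0
    · subst h0; decide
    by_cases h6 : w = 6
    · subst h6; decide
    by_cases h8 : w = 8
    · subst h8; decide
    by_cases h10 : w = 10
    · subst h10; decide
    simp only [h0, h6, h8, h10, if_false]
    rw [Finset.card_eq_zero, Finset.filter_eq_empty_iff]
    intro x hx
    obtain ⟨v, _, rfl⟩ := Finset.mem_image.mp hx
    have := norm_mem v
    simp only [Finset.mem_insert, Finset.mem_singleton] at this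
    rcases this with h | h | h | h <;> rw [h] <;> omega
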